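/- Let C₁ > 0 and C₂ > 0, and let √ denote the principal complex square root. Then for every complex s with Im s > 0, the imaginary part of P^D(s) := C₂/(C₂s + √(1 + C₁s)) is strictly negative; that is, P^D maps the open upper half-plane into the open lower half-plane. -/
import Mathlib


/-- The principal branch of the complex square root. -/
noncomputable def csqrt (z : ℂ) : ℂ := z ^ (1/2 : ℂ)

/-- The transformed JKD dynamic permeability. -/
noncomputable def PD (C₁ C₂ : ℝ) (s : ℂ) : ℂ :=
  (C₂ : ℂ) / ((C₂ : ℂ) * s + csqrt (1 + (C₁ : ℂ) * s))

lemma im_csqrt_pos {z : ℂ} (hz : 0 < z.im) : 0 < (csqrt z).im := by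
  have hz0 : z ≠ 0 := by
    intro h; rw [h] at hz; simp at hz
  have harg0 : 0 < Complex.arg z := by
    rcases lt_or_eq_of_le (Complex.arg_nonneg_iff.mpr hz.le) with h | h
    · exact h
    · exfalso
      have := (Complex.arg_eq_zero_iff.mp h.symm).2
      linarith
  have hargpi : Complex.arg z ≤ Real.pi := Complex.arg_le_pi z
  rw [csqrt, Complex.cpow_def_of_ne_zero hz0, Complex.exp_im]
  apply mul_pos (Real.exp_pos _)
  apply Real.sin_pos_of_pos_of_lt_pi
  · have : (Complex.log z * (1/2 : ℂ)).im = Complex.arg z / 2 := by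
      simp [Complex.log_im, Complex.mul_im]
      ring
    rw [this]; positivity
  · have : (Complex.log z * (1/2 : ℂ)).im = Complex.arg z / 2 := by
      simp [Complex.log_im, Complex.mul_im]
      ring
    rw [this]
    linarith [Real.pi_pos]

/-- P^D maps the open upper half-plane into the open lower half-plane. -/
theorem stmt8 (C₁ C₂ : ℝ) (hC₁ : 0 < C₁) (hC₂ : 0 < C₂) :
    ∀ s : ℂ, 0 < s.im → (PD C₁ C₂ s).im < 0 := by
  intro s hs
  set w : ℂ := (C₂ : ℂ) * s + csqrt (1 + (C₁ : ℂ) * s) with hw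
  have him1 : 0 < (1 + (C₁ : ℂ) * s).im := by
    simp [Complex.add_im, Complex.mul_im]
    positivity
  have hsqrt := im_csqrt_pos him1
  have hwim : 0 < w.im := by
    rw [hw]
    simp [Complex.add_im, Complex.mul_im]
    have : 0 < C₂ * s.im := by positivity
    linarith
  have hw0 : w ≠ 0 := by
    intro h; rw [h] at hwim; simp at hwim
  have : (PD C₁ C₂ s).im = C₂ * (-w.im / Complex.normSq w) := by
    rw [PD, ← hw, div_eq_mul_inv, Complex.mul_im, Complex.inv_im]
    simp
  rw [this]
  have hns : 0 < Complex.normSq w := Complex.normSq_pos.mpr hw0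
  have : -w.im / Complex.normSq w < 0 := div_neg_of_neg_of_pos (by linarith) hns
  exact mul_neg_of_pos_of_neg hC₂ this
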